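/- (Strong duality of the Wasserstein-penalized robust problem.) Let (Z, d) be a complete separable metric space, let μ be a probability measure on Z, let C : Z → ℝ be bounded and continuous, and let λ ≥ 0. Then sup over probability measures ν on Z of [∫ C dν − λ·W_d(ν, μ)] = ∫ φ_λ dμ, where W_d(ν, μ) is the infimum over couplings π of ν and μ of ∫ d(z, z₀) dπ(z, z₀), and φ_λ(z₀) := sup over z ∈ Z of [C(z) − λ·d(z, z₀)]. -/

import Mathlib

open MeasureTheory ENNReal

/-- The Wasserstein distance between `ν` and `μ`: the infimum over couplings `π`
(with first marginal `ν` and second marginal `μ`) of `∫ d(z, z₀) dπ(z, z₀)`. -/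
noncomputable def wassersteinDist {Z : Type*} [MetricSpace Z] [MeasurableSpace Z]
    (ν μ : Measure Z) : ℝ≥0∞ :=
  ⨅ (π : Measure (Z × Z)) (_ : π.map Prod.fst = ν ∧ π.map Prod.snd = μ),
    ∫⁻ p, edist p.1 p.2 ∂π

/-! Weak duality: integrating `C z ≤ φ_λ z₀ + λ d(z, z₀)` against a coupling `π` of `ν` and `μ`
gives `∫ C dν ≤ ∫ φ_λ dμ + λ ∫ d dπ`. Conversely, given `ε > 0`, pick for each `z₀` a point `T z₀`
with `C (T z₀) - λ d(T z₀, z₀) > φ_λ z₀ - ε`; taking the first such point of a dense sequence makes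
`T` measurable, and the coupling `(T, id)_# μ` shows that `ν = T_# μ` is `ε`-optimal.
Both directions are stated through `ENNReal.ofReal`, so that an infinite transport cost and the
case `λ = 0` need no separate treatment. -/

noncomputable def penalizedSup {Z : Type*} [PseudoMetricSpace Z] (C : Z → ℝ) (lam : ℝ)
    (z₀ : Z) : ℝ :=
  ⨆ z, C z - lam * dist z z₀

lemma bddAbove_range_of_abs_le {ι : Type*} {f : ι → ℝ} {M : ℝ} (h : ∀ i, |f i| ≤ M) :
    BddAbove (Set.range f) :=
  ⟨M, Set.forall_mem_range.2 fun i => (abs_le.1 (h i)).2⟩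

section penalizedSup

variable {Z : Type*} [PseudoMetricSpace Z] {C : Z → ℝ} {lam : ℝ}

lemma sub_mul_dist_le_penalizedSup (hC : BddAbove (Set.range C)) (hlam : 0 ≤ lam) (z z₀ : Z) :
    C z - lam * dist z z₀ ≤ penalizedSup C lam z₀ := by
  obtain ⟨M, hM⟩ := hC
  refine le_ciSup (f := fun z => C z - lam * dist z z₀) ⟨M, ?_⟩ z
  rintro _ ⟨y, rfl⟩
  linarith [hM ⟨y, rfl⟩, mul_nonneg hlam (dist_nonneg (x := y) (y := z₀))]

lemma penalizedSup_le_add_mul_dist [Nonempty Z] (hC : BddAbove (Set.range C)) (hlam : 0 ≤ lam)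
    (a b : Z) : penalizedSup C lam a ≤ penalizedSup C lam b + lam * dist a b :=
  ciSup_le fun z => by
    nlinarith [sub_mul_dist_le_penalizedSup hC hlam z b, dist_triangle z a b]

lemma lipschitzWith_penalizedSup [Nonempty Z] (hC : BddAbove (Set.range C)) (hlam : 0 ≤ lam) :
    LipschitzWith lam.toNNReal (penalizedSup C lam) :=
  .of_le_add_mul' lam (penalizedSup_le_add_mul_dist hC hlam)

lemma continuous_penalizedSup [Nonempty Z] (hC : BddAbove (Set.range C)) (hlam : 0 ≤ lam) :
    Continuous (penalizedSup C lam) :=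
  (lipschitzWith_penalizedSup hC hlam).continuous

lemma abs_penalizedSup_le [Nonempty Z] {M : ℝ} (hM : ∀ z, |C z| ≤ M) (hlam : 0 ≤ lam)
    (z₀ : Z) : |penalizedSup C lam z₀| ≤ M := by
  have hC := bddAbove_range_of_abs_le hM
  refine abs_le.2 ⟨?_, ciSup_le fun z => ?_⟩
  · have := sub_mul_dist_le_penalizedSup hC hlam z₀ z₀
    rw [dist_self, mul_zero, sub_zero] at this
    linarith [(abs_le.1 (hM z₀)).1]
  · nlinarith [(abs_le.1 (hM z)).2, mul_nonneg hlam (dist_nonneg (x := z) (y := z₀))]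

end penalizedSup

lemma exists_measurable_forall_lt {X Y : Type*} [TopologicalSpace X]
    [TopologicalSpace.SeparableSpace X] [Nonempty X] [MeasurableSpace X] [MeasurableSpace Y]
    {F : X → Y → ℝ} {g : Y → ℝ} (hF : ∀ y, Continuous (F · y))
    (hFm : ∀ x, Measurable (F x)) (hg : Measurable g) (h : ∀ y, ∃ x, g y < F x y) :
    ∃ T : Y → X, Measurable T ∧ ∀ y, g y < F (T y) y := by
  classical
  set e := TopologicalSpace.denseSeq X
  have he : ∀ y, ∃ n, g y < F (e n) y := fun y =>
    (TopologicalSpace.denseRange_denseSeq X).exists_mem_open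
      (isOpen_lt continuous_const (hF y)) (h y)
  refine ⟨fun y => e (Nat.find (he y)), ?_, fun y => Nat.find_spec (he y)⟩
  exact measurable_from_top.comp <| measurable_find he fun n => measurableSet_lt hg (hFm (e n))

lemma ofReal_integral_le_lintegral_ofReal {α : Type*} [MeasurableSpace α] {μ : Measure α}
    {f : α → ℝ} (hf : Integrable f μ) :
    ENNReal.ofReal (∫ x, f x ∂μ) ≤ ∫⁻ x, ENNReal.ofReal (f x) ∂μ := by
  refine le_trans (ENNReal.ofReal_le_ofReal ?_) ENNReal.ofReal_toReal_le
  rw [integral_eq_lintegral_pos_part_sub_lintegral_neg_part hf]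
  exact sub_le_self _ ENNReal.toReal_nonneg

lemma ofReal_integral_sub_integral_le_lintegral {X Y : Type*} [MeasurableSpace X]
    [MeasurableSpace Y] {π : Measure (X × Y)} {f : X → ℝ} {g : Y → ℝ}
    (hf : Integrable f (π.map Prod.fst)) (hg : Integrable g (π.map Prod.snd))
    {c : X × Y → ℝ≥0∞} (hc : ∀ p, ENNReal.ofReal (f p.1 - g p.2) ≤ c p) :
    ENNReal.ofReal (∫ x, f x ∂π.map Prod.fst - ∫ y, g y ∂π.map Prod.snd) ≤
      ∫⁻ p, c p ∂π := by
  have hf' : Integrable (fun p : X × Y => f p.1) π := hf.comp_measurable measurable_fst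
  have hg' : Integrable (fun p : X × Y => g p.2) π := hg.comp_measurable measurable_snd
  rw [integral_map measurable_fst.aemeasurable hf.aestronglyMeasurable,
    integral_map measurable_snd.aemeasurable hg.aestronglyMeasurable, ← integral_sub hf' hg']
  exact (ofReal_integral_le_lintegral_ofReal (hf'.sub hg')).trans (lintegral_mono hc)

section wassersteinDist

variable {Z : Type*} [MetricSpace Z] [MeasurableSpace Z]

lemma ofReal_integral_sub_integral_le_mul_wassersteinDist {ν μ : Measure Z}
    [IsProbabilityMeasure ν] [IsProbabilityMeasure μ] {f g : Z → ℝ} (hf : Integrable f ν)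
    (hg : Integrable g μ) {lam : ℝ} (hfg : ∀ x y, f x ≤ g y + lam * dist x y) :
    ENNReal.ofReal (∫ x, f x ∂ν - ∫ y, g y ∂μ) ≤
      ENNReal.ofReal lam * wassersteinDist ν μ := by
  -- the product coupling makes the infimum nonempty, which `mul_iInf` needs when `lam = 0`
  have : Nonempty {π : Measure (Z × Z) // π.map Prod.fst = ν ∧ π.map Prod.snd = μ} :=
    ⟨⟨ν.prod μ, by simp, by simp⟩⟩
  rw [wassersteinDist, iInf_subtype', ENNReal.mul_iInf (by simp)]
  refine le_iInf fun ⟨π, hπ₁, hπ₂⟩ => ?_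
  subst hπ₁ hπ₂
  rw [← lintegral_const_mul' _ _ ofReal_ne_top]
  refine ofReal_integral_sub_integral_le_lintegral hf hg fun p => ?_
  rw [edist_dist, ← ENNReal.ofReal_mul' dist_nonneg]
  exact ENNReal.ofReal_le_ofReal (by linarith [hfg p.1 p.2])

lemma wassersteinDist_map_le {Ω : Type*} [MeasurableSpace Ω] {μ : Measure Ω} {S T : Ω → Z}
    (hS : Measurable S) (hT : Measurable T) :
    wassersteinDist (μ.map S) (μ.map T) ≤ ∫⁻ ω, edist (S ω) (T ω) ∂μ := by
  refine (iInf₂_le (μ.map fun ω => (S ω, T ω)) ⟨?_, ?_⟩).trans (lintegral_map_le _ _)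
  · rw [Measure.map_map measurable_fst (hS.prodMk hT)]; rfl
  · rw [Measure.map_map measurable_snd (hS.prodMk hT)]; rfl

lemma ofReal_mul_wassersteinDist_map_le {μ : Measure Z} {T : Z → Z} (hT : Measurable T)
    {lam : ℝ} (hlam : 0 ≤ lam) {g : Z → ℝ} (hg : Integrable g μ)
    (hTg : ∀ z, lam * dist (T z) z ≤ g z) :
    ENNReal.ofReal lam * wassersteinDist (μ.map T) μ ≤ ENNReal.ofReal (∫ z, g z ∂μ) := by
  have hW := wassersteinDist_map_le (μ := μ) hT measurable_id
  rw [Measure.map_id] at hW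
  calc ENNReal.ofReal lam * wassersteinDist (μ.map T) μ
      ≤ ENNReal.ofReal lam * ∫⁻ z, edist (T z) z ∂μ := by gcongr; exact hW
    _ = ∫⁻ z, ENNReal.ofReal (lam * dist (T z) z) ∂μ := by
      rw [← lintegral_const_mul' _ _ ofReal_ne_top]
      simp_rw [edist_dist, ENNReal.ofReal_mul hlam]
    _ ≤ ∫⁻ z, ENNReal.ofReal (g z) ∂μ := lintegral_mono fun z => ENNReal.ofReal_le_ofReal (hTg z)
    _ = ENNReal.ofReal (∫ z, g z ∂μ) := by
      rw [ofReal_integral_eq_lintegral_ofReal hg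
        (ae_of_all _ fun z => (mul_nonneg hlam dist_nonneg).trans (hTg z))]

end wassersteinDist

lemma EReal.coe_mul_coe_ennreal {r : ℝ} (hr : 0 ≤ r) (x : ℝ≥0∞) :
    (r : EReal) * x = ((ENNReal.ofReal r * x : ℝ≥0∞) : EReal) := by
  rw [EReal.coe_ennreal_mul, EReal.coe_ennreal_ofReal, max_eq_left hr]

lemma EReal.coe_sub_coe_ennreal_le {a b : ℝ} {x : ℝ≥0∞} (h : ENNReal.ofReal (a - b) ≤ x) :
    (a : EReal) - x ≤ b := by
  rcases eq_or_ne x ⊤ with rfl | hx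
  · simp
  rw [← EReal.coe_ennreal_toReal hx, ← EReal.coe_sub, EReal.coe_le_coe_iff]
  linarith [(ENNReal.ofReal_le_iff_le_toReal hx).1 h]

lemma EReal.le_coe_sub_coe_ennreal {a b : ℝ} {x : ℝ≥0∞} (hba : b ≤ a)
    (h : x ≤ ENNReal.ofReal (a - b)) : (b : EReal) ≤ a - x := by
  have hx : x ≠ ⊤ := ne_top_of_le_ne_top ofReal_ne_top h
  rw [← EReal.coe_ennreal_toReal hx, ← EReal.coe_sub, EReal.coe_le_coe_iff]
  linarith [ENNReal.toReal_le_of_le_ofReal (_root_.sub_nonneg.2 hba) h]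

section duality

variable {Z : Type*} [MetricSpace Z] [MeasurableSpace Z] [OpensMeasurableSpace Z] {μ : Measure Z}
  {C : Z → ℝ} {M lam : ℝ}

lemma integrable_penalizedSup [Nonempty Z] [IsFiniteMeasure μ] (hM : ∀ z, |C z| ≤ M)
    (hlam : 0 ≤ lam) : Integrable (penalizedSup C lam) μ :=
  .of_bound (continuous_penalizedSup (bddAbove_range_of_abs_le hM) hlam).aestronglyMeasurable M
    (ae_of_all _ (abs_penalizedSup_le hM hlam))

lemma integral_sub_mul_wassersteinDist_le [IsProbabilityMeasure μ] (hC : Measurable C)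
    (hM : ∀ z, |C z| ≤ M) (hlam : 0 ≤ lam) (ν : Measure Z) [IsProbabilityMeasure ν] :
    ((∫ z, C z ∂ν : ℝ) : EReal) - lam * wassersteinDist ν μ ≤
      ((∫ z₀, penalizedSup C lam z₀ ∂μ : ℝ) : EReal) := by
  have := nonempty_of_isProbabilityMeasure μ
  rw [EReal.coe_mul_coe_ennreal hlam]
  refine EReal.coe_sub_coe_ennreal_le <| ofReal_integral_sub_integral_le_mul_wassersteinDist
    (.of_bound hC.aestronglyMeasurable M (ae_of_all _ hM)) (integrable_penalizedSup hM hlam)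
    fun x y => ?_
  linarith [sub_mul_dist_le_penalizedSup (bddAbove_range_of_abs_le hM) hlam x y]

lemma exists_le_integral_sub_mul_wassersteinDist [TopologicalSpace.SeparableSpace Z]
    [IsProbabilityMeasure μ] (hC : Continuous C) (hM : ∀ z, |C z| ≤ M) (hlam : 0 ≤ lam) {t : ℝ}
    (ht : t < ∫ z₀, penalizedSup C lam z₀ ∂μ) :
    ∃ ν : Measure Z, IsProbabilityMeasure ν ∧
      (t : EReal) ≤ ((∫ z, C z ∂ν : ℝ) : EReal) - lam * wassersteinDist ν μ := by
  have := nonempty_of_isProbabilityMeasure μ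
  set φ := penalizedSup C lam
  set ε := ∫ z₀, φ z₀ ∂μ - t
  obtain ⟨T, hT, hTφ⟩ : ∃ T : Z → Z, Measurable T ∧
      ∀ z₀, φ z₀ - ε < C (T z₀) - lam * dist (T z₀) z₀ :=
    exists_measurable_forall_lt (F := fun z z₀ => C z - lam * dist z z₀) (by fun_prop)
      (fun _ => by fun_prop)
      ((continuous_penalizedSup (bddAbove_range_of_abs_le hM) hlam).measurable.sub_const _)
      fun z₀ => exists_lt_of_lt_ciSup (by linarith : φ z₀ - ε < φ z₀)
  have hCT : Integrable (fun z₀ => C (T z₀)) μ :=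
    .of_bound (hC.measurable.comp hT).aestronglyMeasurable M (ae_of_all _ fun _ => hM _)
  have hφ : Integrable φ μ := integrable_penalizedSup hM hlam
  have hCTφ : Integrable (fun z₀ => C (T z₀) - φ z₀) μ := hCT.sub hφ
  have hgap : Integrable (fun z₀ => C (T z₀) - φ z₀ + ε) μ := hCTφ.add (integrable_const ε)
  have hcost_le_gap : ∀ z₀, lam * dist (T z₀) z₀ ≤ C (T z₀) - φ z₀ + ε := fun z₀ => by
    linarith [hTφ z₀]
  have hgap_integral : ∫ z₀, (C (T z₀) - φ z₀ + ε) ∂μ = ∫ z₀, C (T z₀) ∂μ - t := by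
    rw [integral_add hCTφ (integrable_const ε), integral_sub hCT hφ, integral_const]
    simp [ε]
  refine ⟨μ.map T, Measure.isProbabilityMeasure_map hT.aemeasurable, ?_⟩
  rw [integral_map hT.aemeasurable hC.aestronglyMeasurable, EReal.coe_mul_coe_ennreal hlam]
  refine EReal.le_coe_sub_coe_ennreal ?_
    (hgap_integral ▸ ofReal_mul_wassersteinDist_map_le hT hlam hgap hcost_le_gap)
  rw [← sub_nonneg, ← hgap_integral]
  exact integral_nonneg fun z₀ => (mul_nonneg hlam dist_nonneg).trans (hcost_le_gap z₀)

end duality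

theorem wasserstein_penalized_strong_duality_general
    {Z : Type*} [MetricSpace Z] [TopologicalSpace.SeparableSpace Z]
    [MeasurableSpace Z] [BorelSpace Z]
    (μ : Measure Z) [IsProbabilityMeasure μ]
    (C : Z → ℝ) (hC : Continuous C) (hbdd : ∃ M : ℝ, ∀ z, |C z| ≤ M)
    (lam : ℝ) (hlam : 0 ≤ lam)
    (φ : Z → ℝ) (hφ : ∀ z₀, φ z₀ = ⨆ z : Z, (C z - lam * dist z z₀)) :
    (⨆ (ν : Measure Z) (_ : IsProbabilityMeasure ν),
        ((∫ z, C z ∂ν : ℝ) : EReal) - (lam : EReal) * (wassersteinDist ν μ : EReal))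
      = ((∫ z₀, φ z₀ ∂μ : ℝ) : EReal) := by
  obtain rfl : φ = penalizedSup C lam := funext hφ
  obtain ⟨M, hM⟩ := hbdd
  refine le_antisymm
    (iSup₂_le fun ν _ => integral_sub_mul_wassersteinDist_le hC.measurable hM hlam ν) ?_
  refine EReal.ge_of_forall_gt_iff_ge.1 fun t ht => ?_
  obtain ⟨ν, hν, hle⟩ :=
    exists_le_integral_sub_mul_wassersteinDist hC hM hlam (EReal.coe_lt_coe_iff.1 ht)
  exact hle.trans (le_iSup₂ (f := fun ν (_ : IsProbabilityMeasure ν) =>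
    ((∫ z, C z ∂ν : ℝ) : EReal) - (lam : EReal) * (wassersteinDist ν μ : EReal)) ν hν)

/-- **Strong duality of the Wasserstein-penalized robust problem (Eq. (5)).**
On a complete separable metric space, for bounded continuous `C` and `lam ≥ 0`,
`sup_ν [∫ C dν − lam·W_d(ν, μ)] = ∫ φ_lam dμ` where the supremum is over probability
measures `ν` and `φ_lam(z₀) = sup_z [C(z) − lam·d(z, z₀)]`. -/
theorem wasserstein_penalized_strong_duality
    {Z : Type*} [MetricSpace Z] [CompleteSpace Z] [TopologicalSpace.SeparableSpace Z]
    [MeasurableSpace Z] [BorelSpace Z]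
    (μ : Measure Z) [IsProbabilityMeasure μ]
    (C : Z → ℝ) (hC : Continuous C) (hbdd : ∃ M : ℝ, ∀ z, |C z| ≤ M)
    (lam : ℝ) (hlam : 0 ≤ lam)
    (φ : Z → ℝ) (hφ : ∀ z₀, φ z₀ = ⨆ z : Z, (C z - lam * dist z z₀)) :
    (⨆ (ν : Measure Z) (_ : IsProbabilityMeasure ν),
        ((∫ z, C z ∂ν : ℝ) : EReal) - (lam : EReal) * (wassersteinDist ν μ : EReal))
      = ((∫ z₀, φ z₀ ∂μ : ℝ) : EReal) :=
  wasserstein_penalized_strong_duality_general μ C hC hbdd lam hlam φ hφ
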